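/- arXiv:1610.05044 — 4 statements merged into one kernel-verified Lean document; each statement's English description precedes it below -/
import Mathlib

section
/- Let (X,d) be a metric space and μ a Borel probability measure on X. Then for every open set E ⊆ X, the perimeter of E is at most its outer Minkowski content: P(E) ≤ μ⁺(E). -/
open Filter MeasureTheory Set Metric Topology ENNReal

/-- The slope (local Lipschitz constant) of `u` at `x`:
`|∇u|(x) = limsup_{y→x} |u(x)-u(y)|/d(x,y)`, interpreted as `0` when `x` is isolated. -/
noncomputable def slopeAt {X : Type*} [MetricSpace X] (u : X → ℝ) (x : X) : ℝ :=
  Filter.limsup (fun y => |u x - u y| / dist x y) (𝓝[≠] x)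

/-- The perimeter of a set `E` in a metric measure space: the infimum of
`liminf_n ∫ |∇u_n| dμ` over sequences of Lipschitz functions converging to `χ_E` in `L¹(μ)`. -/
noncomputable def perimeter {X : Type*} [MetricSpace X] [MeasurableSpace X]
    (μ : Measure X) (E : Set X) : ℝ≥0∞ :=
  sInf { p : ℝ≥0∞ | ∃ u : ℕ → X → ℝ,
    (∀ n, ∃ K : NNReal, LipschitzWith K (u n)) ∧
    Filter.Tendsto
      (fun n => ∫⁻ x, ENNReal.ofReal |u n x - E.indicator (fun _ => (1:ℝ)) x| ∂μ)
      atTop (𝓝 0) ∧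
    p = Filter.liminf (fun n => ∫⁻ x, ENNReal.ofReal (slopeAt (u n) x) ∂μ) atTop }

/-- The outer Minkowski content of `E`:
`μ⁺(E) = liminf_{ε↓0} (μ(E^ε) - μ(E))/ε`, where `E^ε = {x : d(x,E) ≤ ε}`. -/
noncomputable def minkContent {X : Type*} [MetricSpace X] [MeasurableSpace X]
    (μ : Measure X) (E : Set X) : ℝ≥0∞ :=
  Filter.liminf (fun ε : ℝ => (μ (Metric.cthickening ε E) - μ E) / ENNReal.ofReal ε) (𝓝[>] 0)

/-- Perimeter computed in a metric measure subspace `(S, Euclidean distance, μ)` of `ℝ`. -/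
noncomputable def perimeterOn (S : Set ℝ) (μ : Measure ℝ) (E : Set ℝ) : ℝ≥0∞ :=
  perimeter (Measure.comap (Subtype.val : S → ℝ) μ) ((Subtype.val : S → ℝ) ⁻¹' E)

/-- Outer Minkowski content computed in a metric measure subspace `(S, Euclidean distance, μ)`. -/
noncomputable def minkOn (S : Set ℝ) (μ : Measure ℝ) (E : Set ℝ) : ℝ≥0∞ :=
  minkContent (Measure.comap (Subtype.val : S → ℝ) μ) ((Subtype.val : S → ℝ) ⁻¹' E)

/-- The measure `h · L¹` on `ℝ`. -/
noncomputable def densMeasure (h : ℝ → ℝ) : Measure ℝ :=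
  (volume : Measure ℝ).withDensity (fun t => ENNReal.ofReal (h t))

/-- The distortion coefficients `σ^{(t)}_{K,N'}(θ)`. -/
noncomputable def sigmaCoef (K N' : ℝ) (t θ : ℝ) : ℝ≥0∞ :=
  if N' * Real.pi ^ 2 ≤ K * θ ^ 2 then ∞
  else if 0 < K * θ ^ 2 then
    ENNReal.ofReal (Real.sin (t * θ * Real.sqrt (K / N')) / Real.sin (θ * Real.sqrt (K / N')))
  else if K * θ ^ 2 = 0 ∨ N' = 0 then ENNReal.ofReal t
  else
    ENNReal.ofReal (Real.sinh (t * θ * Real.sqrt (-K / N')) / Real.sinh (θ * Real.sqrt (-K / N')))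

/-- The `CD(K,N)` concavity-type condition for a one-dimensional density `h` on a set `S`:
`h((1-s)t₀+st₁)^{1/(N-1)} ≥ σ^{(1-s)}_{K,N-1}(t₁-t₀) h(t₀)^{1/(N-1)} + σ^{(s)}_{K,N-1}(t₁-t₀) h(t₁)^{1/(N-1)}`. -/
def CDDensity (K N : ℝ) (S : Set ℝ) (h : ℝ → ℝ) : Prop :=
  ∀ s ∈ Set.Icc (0:ℝ) 1, ∀ t₀ ∈ S, ∀ t₁ ∈ S, t₀ < t₁ →
    sigmaCoef K (N - 1) (1 - s) (t₁ - t₀) * ENNReal.ofReal (h t₀ ^ (1 / (N - 1))) +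
        sigmaCoef K (N - 1) s (t₁ - t₀) * ENNReal.ofReal (h t₁ ^ (1 / (N - 1)))
      ≤ ENNReal.ofReal (h ((1 - s) * t₀ + s * t₁) ^ (1 / (N - 1)))

/-- Membership in the family `F^s_{K,N,D}` of synthetic `CD(K,N)` probability densities
supported in `[0,D]`. -/
def memSynthF (K N D : ℝ) (h : ℝ → ℝ) : Prop :=
  (∀ t, 0 ≤ h t) ∧
  Function.support h ⊆ Set.Icc 0 D ∧
  IsProbabilityMeasure (densMeasure h) ∧
  (1 < N → Continuous h ∧ CDDensity K N (closure (Function.support h)) h) ∧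
  (N = 1 → ∀ t₀ ∈ closure (Function.support h), ∀ t₁ ∈ closure (Function.support h),
     h t₀ = h t₁)

/-!
The cutoff `u_ε = max 0 (1 - d(·, E) / ε)` is `ε⁻¹`-Lipschitz, equals `1` on `E` and `0` off
`E^ε`. As `E` is open, `u_ε` is locally constant off `E^ε \ E`, so
`∫ |∇u_ε| dμ ≤ μ(E^ε \ E) / ε` while `‖u_ε - χ_E‖_{L¹} ≤ μ(E^ε \ E)`. For a finite measure the
first bound is the Minkowski quotient, and along radii `ε → 0` on which that quotient stays
below some finite `c`, the second bound `c ε` tends to `0`; so `u_ε` are competitors for `P(E)`.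
-/

open scoped NNReal

section Slope

variable {X : Type*} [MetricSpace X] {u : X → ℝ} {x : X}

lemma slopeAt_le_of_eventually_le {C : ℝ} (hC : 0 ≤ C)
    (h : ∀ᶠ y in 𝓝[≠] x, |u x - u y| ≤ C * dist x y) : slopeAt u x ≤ C := by
  rcases eq_or_neBot (𝓝[≠] x) with hbot | hne
  · -- at an isolated point the limsup is `sInf univ = 0`
    rw [slopeAt, hbot, limsup, limsSup, map_bot]
    simpa using hC
  refine limsup_le_of_le
    (isCoboundedUnder_le_of_le _ fun y => div_nonneg (abs_nonneg _) dist_nonneg) ?_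
  filter_upwards [h, self_mem_nhdsWithin] with y hy hne
  rwa [div_le_iff₀ (dist_pos.2 (Ne.symm hne))]

lemma slopeAt_le_of_lipschitzWith {K : ℝ≥0} (hu : LipschitzWith K u) (x : X) :
    slopeAt u x ≤ K :=
  slopeAt_le_of_eventually_le K.2 <| .of_forall fun y => by
    simpa only [Real.dist_eq] using hu.dist_le_mul x y

lemma slopeAt_nonpos_of_eventually_eq (h : ∀ᶠ y in 𝓝 x, u y = u x) : slopeAt u x ≤ 0 :=
  slopeAt_le_of_eventually_le le_rfl <| by
    filter_upwards [nhdsWithin_le_nhds h] with y hy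
    simp [hy]

end Slope

section Cutoff

variable {X : Type*} [MetricSpace X] {ε : ℝ} (hε : 0 < ε) (E : Set X)

noncomputable def cutoff (x : X) : ℝ := thickenedIndicator hε E x

lemma lipschitzWith_cutoff : LipschitzWith ε.toNNReal⁻¹ (cutoff hε E) :=
  one_mul ε.toNNReal⁻¹ ▸
    (LipschitzWith.subtype_val _).comp (lipschitzWith_thickenedIndicator hε E)

lemma cutoff_of_mem {x : X} (hx : x ∈ E) : cutoff hε E x = 1 := by
  simp [cutoff, thickenedIndicator_one hε E hx]

lemma cutoff_of_notMem_cthickening {x : X} (hx : x ∉ cthickening ε E) : cutoff hε E x = 0 := by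
  simp [cutoff, thickenedIndicator_zero hε E fun h => hx (thickening_subset_cthickening ε E h)]

lemma ofReal_abs_cutoff_sub_indicator_le (x : X) :
    ENNReal.ofReal |cutoff hε E x - E.indicator (fun _ => 1) x|
      ≤ (cthickening ε E \ E).indicator (fun _ => 1) x := by
  by_cases hxE : x ∈ E
  · simp [cutoff_of_mem hε E hxE, hxE]
  by_cases hxC : x ∈ cthickening ε E
  · have h01 : |cutoff hε E x| ≤ 1 := by
      simpa [cutoff, abs_of_nonneg] using thickenedIndicator_le_one hε E x
    simpa [hxE, hxC] using h01
  · simp [cutoff_of_notMem_cthickening hε E hxC, hxC, hxE]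

lemma ofReal_slopeAt_cutoff_le (hE : IsOpen E) (x : X) :
    ENNReal.ofReal (slopeAt (cutoff hε E) x)
      ≤ (cthickening ε E \ E).indicator (fun _ => (ENNReal.ofReal ε)⁻¹) x := by
  by_cases hxE : x ∈ E
  · have hflat : ∀ᶠ y in 𝓝 x, cutoff hε E y = cutoff hε E x := by
      filter_upwards [hE.mem_nhds hxE] with y hy
      rw [cutoff_of_mem hε E hy, cutoff_of_mem hε E hxE]
    simp [ENNReal.ofReal_eq_zero.2 (slopeAt_nonpos_of_eventually_eq hflat)]
  by_cases hxC : x ∈ cthickening ε E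
  · rw [indicator_of_mem (show x ∈ cthickening ε E \ E from ⟨hxC, hxE⟩), ENNReal.ofReal,
      ENNReal.ofReal, ← ENNReal.coe_inv (Real.toNNReal_pos.2 hε).ne']
    exact ENNReal.coe_le_coe.2
      (Real.toNNReal_le_iff_le_coe.2 (slopeAt_le_of_lipschitzWith (lipschitzWith_cutoff hε E) x))
  · have hflat : ∀ᶠ y in 𝓝 x, cutoff hε E y = cutoff hε E x := by
      filter_upwards [isClosed_cthickening.isOpen_compl.mem_nhds hxC] with y hy
      rw [cutoff_of_notMem_cthickening hε E hy, cutoff_of_notMem_cthickening hε E hxC]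
    simp [ENNReal.ofReal_eq_zero.2 (slopeAt_nonpos_of_eventually_eq hflat)]

variable {E} [MeasurableSpace X] (μ : Measure X)

lemma lintegral_abs_cutoff_sub_indicator_le :
    ∫⁻ x, ENNReal.ofReal |cutoff hε E x - E.indicator (fun _ => 1) x| ∂μ
      ≤ μ (cthickening ε E \ E) :=
  (lintegral_mono (ofReal_abs_cutoff_sub_indicator_le hε E)).trans
    ((lintegral_indicator_const_le _ _).trans_eq (one_mul _))

lemma lintegral_slopeAt_cutoff_le (hE : IsOpen E) :
    ∫⁻ x, ENNReal.ofReal (slopeAt (cutoff hε E) x) ∂μ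
      ≤ μ (cthickening ε E \ E) / ENNReal.ofReal ε :=
  (lintegral_mono (ofReal_slopeAt_cutoff_le hε E hE)).trans
    ((lintegral_indicator_const_le _ _).trans_eq (by rw [mul_comm, div_eq_mul_inv]))

end Cutoff

section Perimeter

variable {X : Type*} [MetricSpace X] [MeasurableSpace X] (μ : Measure X) {E : Set X}

lemma perimeter_le_of_forall_lintegral_slopeAt_le {c : ℝ≥0∞} (u : ℕ → X → ℝ)
    (hu : ∀ n, ∃ K : ℝ≥0, LipschitzWith K (u n))
    (hL1 : Tendsto (fun n => ∫⁻ x, ENNReal.ofReal |u n x - E.indicator (fun _ => 1) x| ∂μ)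
      atTop (𝓝 0))
    (hslope : ∀ n, ∫⁻ x, ENNReal.ofReal (slopeAt (u n) x) ∂μ ≤ c) :
    perimeter μ E ≤ c :=
  calc perimeter μ E
    _ ≤ liminf (fun n => ∫⁻ x, ENNReal.ofReal (slopeAt (u n) x) ∂μ) atTop :=
        sInf_le ⟨u, hu, hL1, rfl⟩
    _ ≤ c := liminf_le_of_frequently_le' (.of_forall hslope)

lemma minkContent_eq_liminf_measure_diff [IsFiniteMeasure μ] (hE : NullMeasurableSet E μ) :
    minkContent μ E =
      liminf (fun ε : ℝ => μ (cthickening ε E \ E) / ENNReal.ofReal ε) (𝓝[>] 0) := by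
  simp only [minkContent, measure_sdiff (self_subset_cthickening E) hE (measure_ne_top μ E)]

lemma perimeter_le_of_frequently_lt (hE : IsOpen E) {c : ℝ≥0∞} (hc : c ≠ ⊤)
    (h : ∃ᶠ ε in 𝓝[>] 0, μ (cthickening ε E \ E) / ENNReal.ofReal ε < c) :
    perimeter μ E ≤ c := by
  obtain ⟨ε, hε_lim, hε⟩ :=
    exists_seq_forall_of_frequently (h.and_eventually self_mem_nhdsWithin)
  have hD : ∀ n, μ (cthickening (ε n) E \ E) ≤ c * ENNReal.ofReal (ε n) := fun n =>
    (ENNReal.div_le_iff (ENNReal.ofReal_pos.2 (hε n).2).ne' ENNReal.ofReal_ne_top).1 (hε n).1.le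
  have hcε : Tendsto (fun n => c * ENNReal.ofReal (ε n)) atTop (𝓝 0) := by
    simpa using ENNReal.Tendsto.const_mul
      (ENNReal.tendsto_ofReal (hε_lim.mono_right nhdsWithin_le_nhds)) (Or.inr hc)
  refine perimeter_le_of_forall_lintegral_slopeAt_le μ (fun n => cutoff (hε n).2 E)
    (fun n => ⟨_, lipschitzWith_cutoff _ E⟩) ?_
    (fun n => (lintegral_slopeAt_cutoff_le _ μ hE).trans (hε n).1.le)
  exact tendsto_of_tendsto_of_tendsto_of_le_of_le tendsto_const_nhds hcε (fun _ => zero_le)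
    fun n => (lintegral_abs_cutoff_sub_indicator_le _ μ).trans (hD n)

end Perimeter

/-- For a Borel probability measure on a metric space and any open set `E`,
the perimeter of `E` is at most its outer Minkowski content. -/
theorem perimeter_le_minkContent {X : Type*} [MetricSpace X] [MeasurableSpace X] [BorelSpace X]
    (μ : Measure X) [IsProbabilityMeasure μ] (E : Set X) (hE : IsOpen E) :
    perimeter μ E ≤ minkContent μ E := by
  refine le_of_forall_gt_imp_ge_of_dense fun c hc => ?_
  rcases eq_or_ne c ⊤ with rfl | hc_top
  · exact le_top
  rw [minkContent_eq_liminf_measure_diff μ hE.measurableSet.nullMeasurableSet] at hc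
  exact perimeter_le_of_frequently_lt μ hE hc_top
    (frequently_lt_of_liminf_lt (by isBoundedDefault) hc)
end

section
/- Let K ∈ ℝ, N ∈ (1,∞), D ∈ (0,∞) and let h : ℝ → [0,∞) be continuous, vanishing outside [0,D], with ∫_{[0,D]} h dL¹ = 1, with 0 = inf{t ∈ [0,D] : h(t) > 0} and D = sup{t ∈ [0,D] : h(t) > 0}, and satisfying h((1−s)t₀ + s t₁)^{1/(N−1)} ≥ σ^{(1−s)}_{K,N−1}(t₁−t₀) h(t₀)^{1/(N−1)} + σ^{(s)}_{K,N−1}(t₁−t₀) h(t₁)^{1/(N−1)} for all s ∈ [0,1] and all 0 ≤ t₀ < t₁ ≤ D. Then h(t) > 0 for every t ∈ (0,D), and for every ε ∈ (0, D/2) there exists a constant C(ε) > 0 such that h(t) ≥ C(ε) for all t ∈ [ε, D−ε]. -/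
open Filter MeasureTheory Set Metric Topology ENNReal

lemma sigmaCoef_pos {K N' s θ : ℝ} (hN' : 0 < N') (hs : 0 < s) (hs1 : s ≤ 1) (hθ : 0 < θ) :
    0 < sigmaCoef K N' s θ := by
  unfold sigmaCoef
  split_ifs with h1 h2 h3
  · exact ENNReal.zero_lt_top
  · have hK : 0 < K := by nlinarith [sq_nonneg θ]
    have hdiv : 0 < K / N' := div_pos hK hN'
    set x := θ * Real.sqrt (K / N') with hx
    have hxpos : 0 < x := mul_pos hθ (Real.sqrt_pos.2 hdiv)
    have hx2 : x ^ 2 = K * θ ^ 2 / N' := by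
      rw [hx, mul_pow, Real.sq_sqrt hdiv.le]; ring
    have hxlt : x < Real.pi := by
      have hsq : x ^ 2 < Real.pi ^ 2 := by
        rw [hx2, div_lt_iff₀ hN']; nlinarith [not_le.1 h1]
      exact lt_of_pow_lt_pow_left₀ 2 Real.pi_pos.le hsq
    have hsinx : 0 < Real.sin x := Real.sin_pos_of_pos_of_lt_pi hxpos hxlt
    have hsx : 0 < Real.sin (s * x) :=
      Real.sin_pos_of_pos_of_lt_pi (mul_pos hs hxpos)
        (lt_of_le_of_lt (by nlinarith) hxlt)
    have hrw : s * θ * Real.sqrt (K / N') = s * x := by rw [hx]; ring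
    rw [hrw]
    exact ENNReal.ofReal_pos.2 (div_pos hsx hsinx)
  · exact ENNReal.ofReal_pos.2 hs
  · push_neg at h3
    have hKθ : K * θ ^ 2 < 0 := lt_of_le_of_ne (not_lt.1 h2) h3.1
    have hdiv : 0 < -K / N' := div_pos (by nlinarith [sq_nonneg θ]) hN'
    set x := θ * Real.sqrt (-K / N') with hx
    have hxpos : 0 < x := mul_pos hθ (Real.sqrt_pos.2 hdiv)
    have hrw : s * θ * Real.sqrt (-K / N') = s * x := by rw [hx]; ring
    rw [hrw]
    exact ENNReal.ofReal_pos.2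
      (div_pos (Real.sinh_pos_iff.2 (mul_pos hs hxpos)) (Real.sinh_pos_iff.2 hxpos))

lemma h_pos_between {K N D : ℝ} (hN : 1 < N) (h : ℝ → ℝ) (hnonneg : ∀ t, 0 ≤ h t)
    (hCD : CDDensity K N (Set.Icc 0 D) h)
    {t₀ t t₁ : ℝ} (h0 : t₀ ∈ Set.Icc 0 D) (h1 : t₁ ∈ Set.Icc 0 D)
    (hlt0 : t₀ < t) (hlt1 : t < t₁) (hp1 : 0 < h t₁) : 0 < h t := by
  have hNN : 0 < N - 1 := by linarith
  have hd : 0 < t₁ - t₀ := by linarith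
  set s := (t - t₀) / (t₁ - t₀) with hs
  have hs0 : 0 < s := div_pos (by linarith) hd
  have hs1 : s < 1 := (div_lt_one hd).2 (by linarith)
  have key := hCD s ⟨hs0.le, hs1.le⟩ t₀ h0 t₁ h1 (by linarith)
  have heq : (1 - s) * t₀ + s * t₁ = t := by
    rw [hs]; field_simp; ring
  rw [heq] at key
  have hσ : 0 < sigmaCoef K (N - 1) s (t₁ - t₀) := sigmaCoef_pos hNN hs0 hs1.le hd
  have hA : 0 < ENNReal.ofReal (h t₁ ^ (1 / (N - 1))) :=
    ENNReal.ofReal_pos.2 (Real.rpow_pos_of_pos hp1 _)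
  have hlhs : 0 < ENNReal.ofReal (h t ^ (1 / (N - 1))) :=
    lt_of_lt_of_le (lt_of_lt_of_le (ENNReal.mul_pos hσ.ne' hA.ne') le_add_self) key
  have hpow : 0 < h t ^ (1 / (N - 1)) := ENNReal.ofReal_pos.1 hlhs
  by_contra hc
  push_neg at hc
  have hz : h t = 0 := le_antisymm hc (hnonneg t)
  rw [hz, Real.zero_rpow (by positivity)] at hpow
  exact lt_irrefl 0 hpow

/-- A continuous probability density `h` on `[0,D]` satisfying the `CD(K,N)`
concavity condition, whose support "fills" `[0,D]`, is strictly positive on `(0,D)` and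
bounded below by a positive constant on any `[ε, D-ε]`. -/
theorem density_pos_of_CD (K N D : ℝ) (hN : 1 < N) (hD : 0 < D) (h : ℝ → ℝ)
    (hcont : Continuous h) (hnonneg : ∀ t, 0 ≤ h t)
    (hsupp : ∀ t ∉ Set.Icc 0 D, h t = 0)
    (hint : ∫ t in Set.Icc (0:ℝ) D, h t = 1)
    (hinf : sInf {t ∈ Set.Icc 0 D | 0 < h t} = 0)
    (hsup : sSup {t ∈ Set.Icc 0 D | 0 < h t} = D)
    (hCD : CDDensity K N (Set.Icc 0 D) h) :
    (∀ t ∈ Set.Ioo 0 D, 0 < h t) ∧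
    (∀ ε ∈ Set.Ioo 0 (D / 2), ∃ C : ℝ, 0 < C ∧ ∀ t ∈ Set.Icc ε (D - ε), C ≤ h t) := by
  set P := {t ∈ Set.Icc 0 D | 0 < h t} with hP
  have hPne : P.Nonempty := by
    by_contra hc
    rw [Set.not_nonempty_iff_eq_empty] at hc
    rw [hc, Real.sSup_empty] at hsup
    linarith
  have hpos : ∀ t ∈ Set.Ioo 0 D, 0 < h t := by
    intro t ht
    obtain ⟨ht0, htD⟩ := ht
    -- find t₀ ∈ P with t₀ < t
    have h0 : ∃ t₀ ∈ P, t₀ < t := by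
      by_contra hc
      push_neg at hc
      have : t ≤ sInf P := le_csInf hPne hc
      rw [hinf] at this; linarith
    -- find t₁ ∈ P with t < t₁
    have h1 : ∃ t₁ ∈ P, t < t₁ := by
      by_contra hc
      push_neg at hc
      have : sSup P ≤ t := csSup_le hPne hc
      rw [hsup] at this; linarith
    obtain ⟨t₀, ht₀P, ht₀⟩ := h0
    obtain ⟨t₁, ht₁P, ht₁⟩ := h1
    exact h_pos_between hN h hnonneg hCD ht₀P.1 ht₁P.1 ht₀ ht₁ ht₁P.2
  refine ⟨hpos, ?_⟩
  intro ε hε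
  obtain ⟨hε0, hεD⟩ := hε
  have hne : (Set.Icc ε (D - ε)).Nonempty := ⟨ε, le_refl ε, by linarith⟩
  obtain ⟨x, hxmem, hxmin⟩ := isCompact_Icc.exists_isMinOn hne hcont.continuousOn
  refine ⟨h x, hpos x ⟨by linarith [hxmem.1], by linarith [hxmem.2]⟩, ?_⟩
  intro t ht
  exact hxmin ht
end

section
/- Let D ∈ (0,∞) and let h : ℝ → [0,∞) be continuous, vanishing outside [0,D], and Lipschitz on every compact subset of (0,D); set μ := h·L¹. Let {[a_i,b_i]}_{i∈ℕ} be a countable family of pairwise disjoint closed intervals contained in (0,D). Then P_{([0,D],|·|,μ)}( ⋃_{i∈ℕ} [a_i,b_i] ) ≤ Σ_{i∈ℕ} ( h(a_i) + h(b_i) ). -/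
open Filter MeasureTheory Set Metric Topology ENNReal

/-! Approximate `E = ⋃ᵢ [aᵢ, bᵢ]` by the finite unions `Fₙ = ⋃_{i<n} [aᵢ, bᵢ]` and test the
perimeter with the `δₙ`-thickened indicators of `Fₙ`. Such a function is `δₙ⁻¹`-Lipschitz and
locally constant off the ramps
`cthickening δₙ Fₙ \ interior Fₙ ⊆ ⋃_{i<n} [aᵢ - δₙ, aᵢ] ∪ [bᵢ, bᵢ + δₙ]`,
so its slope integral is at most `δₙ⁻¹ μ(ramps)`, while its `L¹` distance to `χ_E` is at most
`μ(ramps) + μ([0,D] ∩ E \ Fₙ)`. By continuity of `h`, once `δₙ` is small enough each ramp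
carries mass at most `δₙ (h(aᵢ) + h(bᵢ) + eᵢ)`, where `∑ eᵢ < ε`; and `μ([0,D] ∩ E \ Fₙ) → 0`
because `μ` is finite on `[0,D]`. -/

open scoped NNReal symmDiff

section Slope

variable {X : Type*} [MetricSpace X]

theorem slopeAt_le_of_lipschitzOnWith {u : X → ℝ} {x : X} {K : ℝ≥0} {V : Set X} (hV : V ∈ 𝓝 x)
    (hu : LipschitzOnWith K u V) : slopeAt u x ≤ K := by
  rcases eq_or_neBot (𝓝[≠] x) with hbot | hne
  · simp [slopeAt, hbot, limsup_eq, not_bddBelow_univ]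
  refine limsup_le_of_le (isCoboundedUnder_le_of_le _ fun y => by positivity) ?_
  filter_upwards [self_mem_nhdsWithin, nhdsWithin_le_nhds hV] with y hyx hyV
  rw [div_le_iff₀ (dist_pos.2 (Ne.symm hyx)), ← Real.dist_eq]
  exact hu.dist_le_mul x (mem_of_mem_nhds hV) y hyV

theorem slopeAt_nonpos_of_eventuallyEq {u : X → ℝ} {x : X} {c : ℝ}
    (hu : u =ᶠ[𝓝 x] fun _ => c) : slopeAt u x ≤ 0 := by
  simpa using slopeAt_le_of_lipschitzOnWith (K := 0) hu fun y (hy : u y = c) z (hz : u z = c) =>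
    by simp [hy, hz]

end Slope

section ThickenedIndicator

variable {X : Type*} [MetricSpace X] {δ : ℝ} (hδ : 0 < δ) (F : Set X)

theorem slopeAt_thickenedIndicator_le (x : X) :
    slopeAt (fun y => (thickenedIndicator hδ F y : ℝ)) x
      ≤ (cthickening δ F \ interior F).indicator (fun _ => δ⁻¹) x := by
  by_cases hx : x ∈ cthickening δ F \ interior F
  · have hlip := (LipschitzWith.subtype_val _).comp (lipschitzWith_thickenedIndicator hδ F)
    exact (slopeAt_le_of_lipschitzOnWith univ_mem hlip.lipschitzOnWith).trans_eq
      (by simp [hx, hδ.le])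
  rw [indicator_of_notMem hx]
  rcases not_and_or.1 hx with hout | hint
  · refine slopeAt_nonpos_of_eventuallyEq (c := 0) ?_
    filter_upwards [isClosed_cthickening.isOpen_compl.mem_nhds hout] with y hy
    simp [thickenedIndicator_zero hδ F fun h => hy (thickening_subset_cthickening δ F h)]
  · refine slopeAt_nonpos_of_eventuallyEq (c := 1) ?_
    filter_upwards [mem_interior_iff_mem_nhds.1 (not_not.1 hint)] with y hy
    simp [thickenedIndicator_one hδ F hy]

theorem ofReal_abs_thickenedIndicator_sub_indicator_le (E : Set X) (x : X) :
    ENNReal.ofReal |thickenedIndicator hδ F x - E.indicator 1 x|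
      ≤ (cthickening δ F \ interior F).indicator 1 x + (F ∆ E).indicator 1 x := by
  by_cases hx : x ∈ cthickening δ F \ interior F
  · refine le_add_right ((ENNReal.ofReal_le_one.2 ?_).trans_eq (by simp [hx]))
    exact abs_sub_le_of_nonneg_of_le (by positivity)
      (by exact_mod_cast thickenedIndicator_le_one hδ F x)
      (indicator_nonneg (fun _ _ => zero_le_one) x)
      (indicator_apply_le' (fun _ => le_rfl) fun _ => zero_le_one)
  have hF : (thickenedIndicator hδ F x : ℝ) = F.indicator 1 x := by
    rcases not_and_or.1 hx with hout | hint
    · rw [thickenedIndicator_zero hδ F fun h => hout (thickening_subset_cthickening δ F h),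
        indicator_of_notMem fun h => hout (self_subset_cthickening F h)]
      rfl
    · rw [thickenedIndicator_one hδ F (interior_subset (not_not.1 hint)),
        indicator_of_mem (interior_subset (not_not.1 hint))]
      rfl
  rw [hF, ← abs_indicator_symmDiff, indicator_of_notMem hx, zero_add]
  by_cases hFE : x ∈ F ∆ E <;> simp [hFE]

end ThickenedIndicator

section Perimeter

variable {X : Type*} [MetricSpace X] [MeasurableSpace X] [OpensMeasurableSpace X]

theorem perimeter_le_of_tendsto_symmDiff (μ : Measure X) (E : Set X) {F : ℕ → Set X}
    {δ : ℕ → ℝ} {C : ℝ≥0∞} (hδ : ∀ n, 0 < δ n) (hδ0 : Tendsto δ atTop (𝓝 0)) (hC : C ≠ ∞)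
    (hramp : ∀ n, μ (cthickening (δ n) (F n) \ interior (F n)) ≤ ENNReal.ofReal (δ n) * C)
    (hFE : Tendsto (fun n => μ (F n ∆ E)) atTop (𝓝 0)) :
    perimeter μ E ≤ C := by
  set u : ℕ → X → ℝ := fun n x => thickenedIndicator (hδ n) (F n) x
  set R : ℕ → Set X := fun n => cthickening (δ n) (F n) \ interior (F n)
  have hR : ∀ n, MeasurableSet (R n) := fun n =>
    isClosed_cthickening.measurableSet.diff isOpen_interior.measurableSet
  have hlip : ∀ n, ∃ K, LipschitzWith K (u n) := fun n =>
    ⟨_, (LipschitzWith.subtype_val _).comp (lipschitzWith_thickenedIndicator (hδ n) (F n))⟩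
  have hL1 : Tendsto (fun n => ∫⁻ x, ENNReal.ofReal |u n x - E.indicator (fun _ => 1) x| ∂μ)
      atTop (𝓝 0) := by
    have hbound : ∀ n, ∫⁻ x, ENNReal.ofReal |u n x - E.indicator (fun _ => 1) x| ∂μ
        ≤ ENNReal.ofReal (δ n) * C + μ (F n ∆ E) := fun n => calc
      _ ≤ ∫⁻ x, (R n).indicator 1 x + (F n ∆ E).indicator 1 x ∂μ :=
        lintegral_mono fun x => ofReal_abs_thickenedIndicator_sub_indicator_le (hδ n) (F n) E x
      _ = μ (R n) + ∫⁻ x, (F n ∆ E).indicator 1 x ∂μ := by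
        rw [lintegral_add_left (measurable_one.indicator (hR n)), lintegral_indicator_one (hR n)]
      _ ≤ _ := add_le_add (hramp n) ((lintegral_indicator_const_le _ _).trans_eq (one_mul _))
    have hlim : Tendsto (fun n => ENNReal.ofReal (δ n) * C + μ (F n ∆ E)) atTop (𝓝 0) := by
      simpa using (ENNReal.Tendsto.mul_const (ENNReal.tendsto_ofReal hδ0) (Or.inr hC)).add hFE
    exact tendsto_of_tendsto_of_tendsto_of_le_of_le tendsto_const_nhds hlim (fun _ => bot_le)
      hbound
  have hslope : ∀ n, ∫⁻ x, ENNReal.ofReal (slopeAt (u n) x) ∂μ ≤ C := fun n => calc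
    _ ≤ ∫⁻ x, (R n).indicator (fun _ => ENNReal.ofReal (δ n)⁻¹) x ∂μ := lintegral_mono fun x =>
        (ENNReal.ofReal_le_ofReal (slopeAt_thickenedIndicator_le (hδ n) (F n) x)).trans_eq
          (by by_cases hx : x ∈ R n <;> simp [R, hx])
    _ = ENNReal.ofReal (δ n)⁻¹ * μ (R n) := lintegral_indicator_const (hR n) _
    _ ≤ ENNReal.ofReal (δ n)⁻¹ * (ENNReal.ofReal (δ n) * C) := by gcongr; exact hramp n
    _ = C := by
      rw [← mul_assoc, ← ENNReal.ofReal_mul (inv_nonneg.2 (hδ n).le),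
        inv_mul_cancel₀ (hδ n).ne', ENNReal.ofReal_one, one_mul]
  exact (sInf_le ⟨u, hlip, hL1, rfl⟩ : perimeter μ E ≤ _).trans
    (liminf_le_of_frequently_le' (.of_forall hslope))

end Perimeter

theorem Isometry.cthickening_preimage_subset {X Y : Type*} [PseudoEMetricSpace X]
    [PseudoEMetricSpace Y] {f : X → Y} (hf : Isometry f) (δ : ℝ) (s : Set Y) :
    cthickening δ (f ⁻¹' s) ⊆ f ⁻¹' cthickening δ s := fun x hx => by
  rw [mem_preimage, mem_cthickening_iff] at *
  calc infEDist (f x) s ≤ infEDist (f x) (f '' (f ⁻¹' s)) :=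
        infEDist_anti (image_preimage_subset f s)
    _ = infEDist x (f ⁻¹' s) := infEDist_image hf
    _ ≤ _ := hx

theorem perimeterOn_le_of_tendsto_symmDiff {S : Set ℝ} (hS : MeasurableSet S) (μ : Measure ℝ)
    (E : Set ℝ) {F : ℕ → Set ℝ} {δ : ℕ → ℝ} {C : ℝ≥0∞} (hδ : ∀ n, 0 < δ n)
    (hδ0 : Tendsto δ atTop (𝓝 0)) (hC : C ≠ ∞)
    (hramp : ∀ n, μ (cthickening (δ n) (F n) \ interior (F n)) ≤ ENNReal.ofReal (δ n) * C)
    (hFE : Tendsto (fun n => μ (S ∩ F n ∆ E)) atTop (𝓝 0)) :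
    perimeterOn S μ E ≤ C := by
  have hval := MeasurableEmbedding.subtype_coe hS
  refine perimeter_le_of_tendsto_symmDiff _ _ (F := fun n => Subtype.val ⁻¹' F n) hδ hδ0 hC
    (fun n => ?_) ?_
  · rw [hval.comap_apply]
    refine (measure_mono ?_).trans (hramp n)
    rintro _ ⟨x, ⟨hxc, hxi⟩, rfl⟩
    exact ⟨isometry_subtype_coe.cthickening_preimage_subset _ _ hxc,
      fun h => hxi (preimage_interior_subset_interior_preimage continuous_subtype_val h)⟩
  · simpa only [hval.comap_apply, ← preimage_symmDiff, Subtype.image_preimage_coe] using hFE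

theorem exists_seq_tendsto_zero_of_eventually {P : ℕ → ℝ → Prop}
    (hP : ∀ n, ∀ᶠ δ in 𝓝[>] 0, P n δ) :
    ∃ δ : ℕ → ℝ, (∀ n, 0 < δ n) ∧ Tendsto δ atTop (𝓝 0) ∧ ∀ n, P n (δ n) := by
  have : ∀ n : ℕ, ∃ δ, δ ∈ Ioo 0 (1 / ((n : ℝ) + 1)) ∧ P n δ := fun n =>
    (Filter.Eventually.and (Ioo_mem_nhdsGT (by positivity)) (hP n)).exists
  choose δ hδ hPδ using this
  exact ⟨δ, fun n => (hδ n).1, squeeze_zero (fun n => (hδ n).1.le) (fun n => (hδ n).2.le)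
    tendsto_one_div_add_atTop_nhds_zero_nat, hPδ⟩

theorem tendsto_measure_iUnion_diff_biUnion_range {α : Type*} [MeasurableSpace α]
    (μ : Measure α) [IsFiniteMeasure μ] {s : ℕ → Set α} (hs : ∀ i, MeasurableSet (s i)) :
    Tendsto (fun n => μ ((⋃ i, s i) \ ⋃ i ∈ Finset.range n, s i)) atTop (𝓝 0) := by
  have hanti : Antitone fun n => (⋃ i, s i) \ ⋃ i ∈ Finset.range n, s i := fun m n hmn =>
    sdiff_subset_sdiff_right (biUnion_subset_biUnion_left (by simpa using hmn))
  have hempty : ⋂ n, ((⋃ i, s i) \ ⋃ i ∈ Finset.range n, s i) = ∅ := by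
    refine eq_empty_of_forall_notMem fun x hx => ?_
    obtain ⟨i, hi⟩ := mem_iUnion.1 (mem_iInter.1 hx 0).1
    exact (mem_iInter.1 hx (i + 1)).2 (mem_biUnion (Finset.self_mem_range_succ i) hi)
  have := tendsto_measure_iInter_atTop
    (fun n => ((MeasurableSet.iUnion hs).diff
      (Finset.measurableSet_biUnion _ fun i _ => hs i)).nullMeasurableSet)
    hanti ⟨0, measure_ne_top μ _⟩
  rwa [hempty, measure_empty] at this

theorem eventually_withDensity_le_mul {X : Type*} [PseudoMetricSpace X] [MeasurableSpace X]
    (μ : Measure X) {f : X → ℝ≥0∞} {x : X} (hf : ContinuousAt f x) (hfx : f x ≠ ∞)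
    {e : ℝ≥0∞} (he : e ≠ 0) :
    ∀ᶠ r in 𝓝[>] 0, ∀ s ⊆ closedBall x r, MeasurableSet s →
      μ.withDensity f s ≤ (f x + e) * μ s := by
  obtain ⟨ρ, hρ, hball⟩ := eventually_nhds_iff_ball.1
    (hf.eventually_lt continuousAt_const (ENNReal.lt_add_right hfx he))
  filter_upwards [Ioo_mem_nhdsGT hρ] with r hr s hs hsm
  rw [withDensity_apply _ hsm, ← setLIntegral_const]
  exact setLIntegral_mono' hsm fun y hy => (hball y (closedBall_subset_ball hr.2 (hs hy))).le

theorem cthickening_biUnion_Icc_diff_interior_subset {ι : Type*} (s : Finset ι) (a b : ι → ℝ)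
    {δ : ℝ} (hδ : 0 ≤ δ) :
    cthickening δ (⋃ i ∈ s, Icc (a i) (b i)) \ interior (⋃ i ∈ s, Icc (a i) (b i))
      ⊆ ⋃ i ∈ s, (Icc (a i - δ) (a i) ∪ Icc (b i) (b i + δ)) := by
  rw [(isClosed_biUnion_finset fun i _ => isClosed_Icc).cthickening_eq_biUnion_closedBall hδ]
  rintro x ⟨hx, hxF⟩
  obtain ⟨y, hy, hxy⟩ := mem_iUnion₂.1 hx
  obtain ⟨i, hi, hyi⟩ := mem_iUnion₂.1 hy
  have hxi : x ∉ Ioo (a i) (b i) := fun h =>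
    hxF (interior_mono (subset_biUnion_of_mem (u := fun i => Icc (a i) (b i)) hi)
      (by rwa [interior_Icc]))
  rw [Real.closedBall_eq_Icc] at hxy
  simp only [mem_Ioo, not_and_or, not_lt] at hxi
  refine mem_biUnion hi ?_
  rcases hxi with h | h
  · exact Or.inl ⟨by linarith [hxy.1, hyi.1], h⟩
  · exact Or.inr ⟨h, by linarith [hxy.2, hyi.2]⟩

theorem eventually_densMeasure_Icc_union_Icc_le {h : ℝ → ℝ} {a b : ℝ} (ha : ContinuousAt h a)
    (hb : ContinuousAt h b) (ha0 : 0 ≤ h a) (hb0 : 0 ≤ h b) {e : ℝ≥0∞} (he : e ≠ 0) :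
    ∀ᶠ δ in 𝓝[>] 0, densMeasure h (Icc (a - δ) a ∪ Icc b (b + δ))
      ≤ ENNReal.ofReal δ * (ENNReal.ofReal (h a + h b) + e) := by
  have hloc : ∀ x, ContinuousAt h x → ∀ᶠ r in 𝓝[>] 0, ∀ s ⊆ closedBall x r, MeasurableSet s →
      densMeasure h s ≤ (ENNReal.ofReal (h x) + e / 2) * volume s := fun x hx =>
    eventually_withDensity_le_mul volume (ENNReal.continuous_ofReal.continuousAt.comp hx)
      ENNReal.ofReal_ne_top (ENNReal.half_pos he).ne'
  filter_upwards [hloc a ha, hloc b hb, self_mem_nhdsWithin] with δ hA hB (hδ : 0 < δ)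
  have hleft := hA (Icc (a - δ) a)
    (by rw [Real.closedBall_eq_Icc]; exact Icc_subset_Icc le_rfl (by linarith)) measurableSet_Icc
  have hright := hB (Icc b (b + δ))
    (by rw [Real.closedBall_eq_Icc]; exact Icc_subset_Icc (by linarith) le_rfl) measurableSet_Icc
  rw [Real.volume_Icc, _root_.sub_sub_cancel] at hleft
  rw [Real.volume_Icc, add_sub_cancel_left] at hright
  calc _ ≤ densMeasure h (Icc (a - δ) a) + densMeasure h (Icc b (b + δ)) := measure_union_le _ _
    _ ≤ (ENNReal.ofReal (h a) + e / 2) * ENNReal.ofReal δ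
        + (ENNReal.ofReal (h b) + e / 2) * ENNReal.ofReal δ := add_le_add hleft hright
    _ = ENNReal.ofReal δ * (ENNReal.ofReal (h a) + ENNReal.ofReal (h b) + (e / 2 + e / 2)) := by
      ring
    _ = _ := by rw [ENNReal.add_halves, ENNReal.ofReal_add ha0 hb0]

theorem eventually_densMeasure_cthickening_diff_interior_le {ι : Type*} {h : ℝ → ℝ}
    (hcont : Continuous h) (hnonneg : ∀ t, 0 ≤ h t) (s : Finset ι) (a b : ι → ℝ)
    {e : ι → ℝ≥0∞} (he : ∀ i, e i ≠ 0) :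
    ∀ᶠ δ in 𝓝[>] 0,
      densMeasure h (cthickening δ (⋃ i ∈ s, Icc (a i) (b i)) \ interior (⋃ i ∈ s, Icc (a i) (b i)))
        ≤ ENNReal.ofReal δ * ∑ i ∈ s, (ENNReal.ofReal (h (a i) + h (b i)) + e i) := by
  filter_upwards [s.eventually_all.2 fun i _ => eventually_densMeasure_Icc_union_Icc_le
    hcont.continuousAt hcont.continuousAt (hnonneg (a i)) (hnonneg (b i)) (he i),
    self_mem_nhdsWithin] with δ hδi (hδ : 0 < δ)
  calc _ ≤ densMeasure h (⋃ i ∈ s, (Icc (a i - δ) (a i) ∪ Icc (b i) (b i + δ))) :=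
        measure_mono (cthickening_biUnion_Icc_diff_interior_subset s a b hδ.le)
    _ ≤ ∑ i ∈ s, densMeasure h (Icc (a i - δ) (a i) ∪ Icc (b i) (b i + δ)) :=
        measure_biUnion_finset_le _ _
    _ ≤ _ := (Finset.sum_le_sum hδi).trans_eq (Finset.mul_sum _ _ _).symm

theorem perimeter_union_le_sum_general (D : ℝ) (h : ℝ → ℝ) (hcont : Continuous h)
    (hnonneg : ∀ t, 0 ≤ h t) (a b : ℕ → ℝ) :
    perimeterOn (Set.Icc 0 D) (densMeasure h) (⋃ i, Set.Icc (a i) (b i))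
      ≤ ∑' i, ENNReal.ofReal (h (a i) + h (b i)) := by
  set F : ℕ → Set ℝ := fun n => ⋃ i ∈ Finset.range n, Icc (a i) (b i)
  refine ENNReal.le_of_forall_pos_le_add fun ε hε hS => ?_
  obtain ⟨e, he, hesum⟩ := ENNReal.exists_pos_sum_of_countable (ENNReal.coe_ne_zero.2 hε.ne') ℕ
  have hramp : ∀ n, ∀ᶠ δ in 𝓝[>] 0, densMeasure h (cthickening δ (F n) \ interior (F n))
      ≤ ENNReal.ofReal δ * (∑' i, ENNReal.ofReal (h (a i) + h (b i)) + ε) := fun n => by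
    filter_upwards [eventually_densMeasure_cthickening_diff_interior_le hcont hnonneg
      (Finset.range n) a b fun i => ENNReal.coe_ne_zero.2 (he i).ne'] with δ hδ
    refine hδ.trans ?_
    gcongr
    calc _ ≤ ∑' i, (ENNReal.ofReal (h (a i) + h (b i)) + e i) := ENNReal.sum_le_tsum _
      _ ≤ _ := by rw [ENNReal.tsum_add]; gcongr
  obtain ⟨δ, hδ, hδ0, hδramp⟩ := exists_seq_tendsto_zero_of_eventually hramp
  have : IsLocallyFiniteMeasure (densMeasure h) :=
    IsLocallyFiniteMeasure.withDensity_ofReal hcont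
  have : IsFiniteMeasure ((densMeasure h).restrict (Icc 0 D)) :=
    isFiniteMeasure_restrict.2 (isCompact_Icc (a := (0 : ℝ)) (b := D)).measure_lt_top.ne
  refine perimeterOn_le_of_tendsto_symmDiff measurableSet_Icc _ _ hδ hδ0
    (ENNReal.add_ne_top.2 ⟨hS.ne, ENNReal.coe_ne_top⟩) hδramp ?_
  refine (tendsto_measure_iUnion_diff_biUnion_range ((densMeasure h).restrict (Icc 0 D))
    (s := fun i => Icc (a i) (b i)) fun i => measurableSet_Icc).congr fun n => ?_
  rw [symmDiff_of_le (iUnion₂_subset fun i _ => subset_iUnion (fun i => Icc (a i) (b i)) i),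
    Measure.restrict_apply (by measurability), inter_comm]

/-- For a continuous density `h` vanishing outside `[0,D]`, Lipschitz on every
compact subset of `(0,D)`, and a countable family of pairwise disjoint closed intervals in
`(0,D)`, the perimeter of their union is at most `Σᵢ (h(aᵢ) + h(bᵢ))`. -/
theorem perimeter_union_le_sum (D : ℝ) (hD : 0 < D) (h : ℝ → ℝ) (hcont : Continuous h)
    (hnonneg : ∀ t, 0 ≤ h t) (hsupp : ∀ t ∉ Set.Icc 0 D, h t = 0)
    (hlip : ∀ s : Set ℝ, IsCompact s → s ⊆ Set.Ioo 0 D → ∃ L : NNReal, LipschitzOnWith L h s)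
    (a b : ℕ → ℝ) (hab : ∀ i, a i ≤ b i)
    (hsub : ∀ i, Set.Icc (a i) (b i) ⊆ Set.Ioo 0 D)
    (hdisj : Pairwise fun i j => Disjoint (Set.Icc (a i) (b i)) (Set.Icc (a j) (b j))) :
    perimeterOn (Set.Icc 0 D) (densMeasure h) (⋃ i, Set.Icc (a i) (b i))
      ≤ ∑' i, ENNReal.ofReal (h (a i) + h (b i)) :=
  perimeter_union_le_sum_general D h hcont hnonneg a b
end

section
/- Let h : ℝ → [0,∞) be continuous and set μ := h·L¹ on ℝ. Let [a₁,b₁], …, [aₙ,bₙ] be finitely many pairwise disjoint closed intervals (a_i ≤ b_i) and E := ⋃_{i=1}^n [a_i,b_i]. Then the outer Minkowski content of E in (ℝ, Euclidean distance, μ) satisfies μ⁺(E) = Σ_{i=1}^n ( h(a_i) + h(b_i) ), and moreover the liminf defining μ⁺(E) is a limit. -/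
open Filter MeasureTheory Set Metric Topology ENNReal

private lemma cthickening_Icc_real {a b : ℝ} (hab : a ≤ b) {ε : ℝ} (hε : 0 ≤ ε) :
    Metric.cthickening ε (Set.Icc a b) = Set.Icc (a - ε) (b + ε) := by
  rw [Real.Icc_eq_closedBall, cthickening_closedBall hε (by linarith),
    Real.closedBall_eq_Icc]
  congr 1 <;> ring

private lemma cthickening_iUnion_fin {n : ℕ} (s : Fin n → Set ℝ) (ε : ℝ) :
    Metric.cthickening ε (⋃ i, s i) = ⋃ i, Metric.cthickening ε (s i) := by
  ext x
  simp only [Set.mem_iUnion, Metric.mem_cthickening_iff, EMetric.infEdist_iUnion]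
  rcases isEmpty_or_nonempty (Fin n) with hemp | hne
  · rw [iInf_of_empty]
    simp [ENNReal.ofReal_lt_top]
  constructor
  · intro hx
    obtain ⟨i, hi⟩ := Finite.exists_min (fun i => EMetric.infEdist x (s i))
    exact ⟨i, (le_iInf hi).trans hx⟩
  · rintro ⟨i, hi⟩
    exact le_trans (iInf_le _ i) hi

/-- For `μ = h·L¹` with `h` continuous and a finite union `E` of pairwise
disjoint closed intervals, the outer Minkowski content of `E` in `(ℝ,|·|,μ)` equals
`Σᵢ (h(aᵢ) + h(bᵢ))`, and the liminf defining it is a limit. -/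
theorem mink_finite_union (h : ℝ → ℝ) (hcont : Continuous h) (hnonneg : ∀ t, 0 ≤ h t)
    (n : ℕ) (a b : Fin n → ℝ) (hab : ∀ i, a i ≤ b i)
    (hdisj : Pairwise fun i j => Disjoint (Set.Icc (a i) (b i)) (Set.Icc (a j) (b j)))
    (E : Set ℝ) (hE : E = ⋃ i, Set.Icc (a i) (b i)) :
    minkContent (densMeasure h) E = ∑ i, ENNReal.ofReal (h (a i) + h (b i)) ∧
    Filter.Tendsto
      (fun ε : ℝ =>
        (densMeasure h (Metric.cthickening ε E) - densMeasure h E) / ENNReal.ofReal ε)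
      (𝓝[>] 0) (𝓝 (∑ i, ENNReal.ofReal (h (a i) + h (b i)))) := by
  subst hE
  set F : ℝ → ℝ := fun x => ∫ t in (0:ℝ)..x, h t with hFdef
  have hint : ∀ c d : ℝ, IntervalIntegrable h volume c d := fun c d =>
    hcont.intervalIntegrable c d
  have hFsub : ∀ c d : ℝ, F d - F c = ∫ t in c..d, h t := fun c d =>
    intervalIntegral.integral_interval_sub_left (hint 0 d) (hint 0 c)
  have hFmono : Monotone F := by
    intro c d hcd
    have h1 : (0:ℝ) ≤ ∫ t in c..d, h t :=
      intervalIntegral.integral_nonneg hcd fun x _ => hnonneg x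
    have := hFsub c d
    linarith
  have hFd : ∀ x : ℝ, HasDerivAt F (h x) x := fun x =>
    intervalIntegral.integral_hasDerivAt_right (hint 0 x)
      hcont.stronglyMeasurable.stronglyMeasurableAtFilter hcont.continuousAt
  have hmeasIcc : ∀ c d : ℝ, c ≤ d →
      densMeasure h (Set.Icc c d) = ENNReal.ofReal (F d - F c) := by
    intro c d hcd
    rw [densMeasure, withDensity_apply _ measurableSet_Icc,
      ← ofReal_integral_eq_lintegral_ofReal hcont.integrableOn_Icc
        (Filter.Eventually.of_forall fun x => hnonneg x)]
    congr 1
    rw [hFsub, intervalIntegral.integral_of_le hcd, MeasureTheory.integral_Icc_eq_integral_Ioc]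
  -- slope limits
  have hright : ∀ x : ℝ, Tendsto (fun ε : ℝ => (F (x + ε) - F x) / ε)
      (𝓝[>] (0:ℝ)) (𝓝 (h x)) := by
    intro x
    have hmap : Tendsto (fun ε : ℝ => x + ε) (𝓝[>] 0) (𝓝[≠] x) := by
      apply tendsto_nhdsWithin_of_tendsto_nhds_of_eventually_within
      · have : Tendsto (fun ε : ℝ => x + ε) (𝓝 0) (𝓝 (x + 0)) :=
          (continuous_const.add continuous_id).tendsto 0
        simpa using this.mono_left nhdsWithin_le_nhds
      · filter_upwards [self_mem_nhdsWithin] with ε hε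
        have hε' : (0:ℝ) < ε := hε
        simp only [Set.mem_compl_iff, Set.mem_singleton_iff]
        intro hcon; linarith
    have h1 := (hasDerivAt_iff_tendsto_slope.mp (hFd x)).comp hmap
    refine h1.congr fun ε => ?_
    simp only [Function.comp_apply, slope_def_field, add_sub_cancel_left]
  have hleft : ∀ x : ℝ, Tendsto (fun ε : ℝ => (F x - F (x - ε)) / ε)
      (𝓝[>] (0:ℝ)) (𝓝 (h x)) := by
    intro x
    have hmap : Tendsto (fun ε : ℝ => x - ε) (𝓝[>] 0) (𝓝[≠] x) := by
      apply tendsto_nhdsWithin_of_tendsto_nhds_of_eventually_within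
      · have : Tendsto (fun ε : ℝ => x - ε) (𝓝 0) (𝓝 (x - 0)) :=
          (continuous_const.sub continuous_id).tendsto 0
        simpa using this.mono_left nhdsWithin_le_nhds
      · filter_upwards [self_mem_nhdsWithin] with ε hε
        have hε' : (0:ℝ) < ε := hε
        simp only [Set.mem_compl_iff, Set.mem_singleton_iff]
        intro hcon; linarith
    have h1 := (hasDerivAt_iff_tendsto_slope.mp (hFd x)).comp hmap
    refine h1.congr fun ε => ?_
    rw [Function.comp_apply, slope_def_field]
    have : x - ε - x = -ε := by ring
    rw [this]
    rw [div_neg, ← neg_div, neg_sub]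
  -- the real-valued limit
  have hG : Tendsto (fun ε : ℝ => ∑ i, ((F (a i) - F (a i - ε)) / ε + (F (b i + ε) - F (b i)) / ε))
      (𝓝[>] (0:ℝ)) (𝓝 (∑ i, (h (a i) + h (b i)))) :=
    tendsto_finset_sum _ fun i _ => (hleft (a i)).add (hright (b i))
  have key : Tendsto (fun ε : ℝ => ENNReal.ofReal
        (∑ i, ((F (a i) - F (a i - ε)) / ε + (F (b i + ε) - F (b i)) / ε)))
      (𝓝[>] (0:ℝ)) (𝓝 (∑ i, ENNReal.ofReal (h (a i) + h (b i)))) := by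
    have := ENNReal.tendsto_ofReal hG
    rwa [ENNReal.ofReal_sum_of_nonneg
      (fun i _ => add_nonneg (hnonneg (a i)) (hnonneg (b i)))] at this
  -- eventual disjointness of thickened intervals
  have hdisj2 : ∀ᶠ ε in 𝓝[>] (0:ℝ), ∀ i j : Fin n, i ≠ j →
      Disjoint (Set.Icc (a i - ε) (b i + ε)) (Set.Icc (a j - ε) (b j + ε)) := by
    rw [eventually_all]
    intro i
    rw [eventually_all]
    intro j
    rcases eq_or_ne i j with rfl | hij
    · exact Filter.Eventually.of_forall fun _ hcon => absurd rfl hcon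
    obtain ⟨δ, hδpos, hδ⟩ := (hdisj hij).exists_cthickenings isCompact_Icc isClosed_Icc
    filter_upwards [Ioo_mem_nhdsGT_of_mem (Set.left_mem_Ico.mpr hδpos)] with ε hε _
    have hε0 : (0:ℝ) < ε := hε.1
    have hεδ : ε ≤ δ := hε.2.le
    have h1 : Set.Icc (a i - ε) (b i + ε) ⊆ Metric.cthickening δ (Set.Icc (a i) (b i)) := by
      rw [← cthickening_Icc_real (hab i) hε0.le]
      exact Metric.cthickening_mono hεδ _
    have h2 : Set.Icc (a j - ε) (b j + ε) ⊆ Metric.cthickening δ (Set.Icc (a j) (b j)) := by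
      rw [← cthickening_Icc_real (hab j) hε0.le]
      exact Metric.cthickening_mono hεδ _
    exact hδ.mono h1 h2
  -- the eventual identity
  have hev : ∀ᶠ ε in 𝓝[>] (0:ℝ),
      (densMeasure h (Metric.cthickening ε (⋃ i, Set.Icc (a i) (b i)))
          - densMeasure h (⋃ i, Set.Icc (a i) (b i))) / ENNReal.ofReal ε
        = ENNReal.ofReal
            (∑ i, ((F (a i) - F (a i - ε)) / ε + (F (b i + ε) - F (b i)) / ε)) := by
    filter_upwards [hdisj2, self_mem_nhdsWithin] with ε hd hε
    have hε0 : (0:ℝ) < ε := hε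
    have hthick : Metric.cthickening ε (⋃ i, Set.Icc (a i) (b i))
        = ⋃ i, Set.Icc (a i - ε) (b i + ε) := by
      rw [cthickening_iUnion_fin]
      exact iUnion_congr fun i => cthickening_Icc_real (hab i) hε0.le
    have hmu1 : densMeasure h (⋃ i, Set.Icc (a i - ε) (b i + ε))
        = ENNReal.ofReal (∑ i, (F (b i + ε) - F (a i - ε))) := by
      rw [measure_iUnion hd fun i => measurableSet_Icc, tsum_fintype,
        ENNReal.ofReal_sum_of_nonneg]
      · exact Finset.sum_congr rfl fun i _ =>
          hmeasIcc _ _ (by have := hab i; linarith)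
      · intro i _
        have : a i - ε ≤ b i + ε := by have := hab i; linarith
        linarith [sub_nonneg.mpr (hFmono this)]
    have hmu2 : densMeasure h (⋃ i, Set.Icc (a i) (b i))
        = ENNReal.ofReal (∑ i, (F (b i) - F (a i))) := by
      rw [measure_iUnion hdisj fun i => measurableSet_Icc, tsum_fintype,
        ENNReal.ofReal_sum_of_nonneg]
      · exact Finset.sum_congr rfl fun i _ => hmeasIcc _ _ (hab i)
      · exact fun i _ => sub_nonneg.mpr (hFmono (hab i))
    rw [hthick, hmu1, hmu2, ← ENNReal.ofReal_sub _
        (Finset.sum_nonneg fun i _ => sub_nonneg.mpr (hFmono (hab i))),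
      ← Finset.sum_sub_distrib, ← ENNReal.ofReal_div_of_pos hε0]
    congr 1
    rw [Finset.sum_div]
    refine Finset.sum_congr rfl fun i _ => ?_
    field_simp
    ring
  have htend : Tendsto
      (fun ε : ℝ => (densMeasure h (Metric.cthickening ε (⋃ i, Set.Icc (a i) (b i)))
          - densMeasure h (⋃ i, Set.Icc (a i) (b i))) / ENNReal.ofReal ε)
      (𝓝[>] (0:ℝ)) (𝓝 (∑ i, ENNReal.ofReal (h (a i) + h (b i)))) :=
    key.congr' (Filter.EventuallyEq.symm hev)
  exact ⟨htend.liminf_eq, htend⟩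
end
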